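/- Let [a,b] be a finite interval, 𝔠 a chain of i-boxes of range [a,b], and let [c,d] be an i-box of 𝔠 of index ı and i-cardinality k; let [e, b(ı)^−] be the i-box of index ı and i-cardinality k in the standard chain 𝔠_−^{[a,b]}, with corresponding vertex v of Q^{[a,b]}(w_0). Then the number of mutations at v in the mutation sequence associated with the canonical chain transformation 𝔠_−^{[a,b]} ↦ 𝔠 equals the unique integer m ≥ 0 with [c,d] = τ^{−m}[e, b(ı)^−]. -/

import Mathlib

/-!
Number of mutations (Lemma `lem_numb_mut`): let `[a,b]` be a finite interval, `𝔠` a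
chain of i-boxes of range `[a,b]`, `[c,d]` an i-box of `𝔠` of index `i` and
i-cardinality `κ`, and `[e, b(i)⁻]` the i-box of the standard chain `𝔠₋^{[a,b]}` with
the same index and i-cardinality, with corresponding vertex `v` of `Q^{[a,b]}(w₀)`.
Then the number of mutations at `v` in the mutation sequence associated with the
canonical chain transformation `𝔠₋^{[a,b]} ↦ 𝔠` equals the integer `m ≥ 0` defined by
`[c,d] = τ^{-m} [e, b(i)⁻]` (i.e. `m` is the number of occurrences of `i` in `(d, b]`).

Chains of i-boxes are encoded by pairs `(c, E)`; the canonical chain transformation is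
the explicit sequence of box moves performing, for each right expansion operator of `E`
from the last to the first, the box moves at positions `1, 2, …, k_j` (a basic chain
transformation); and a box move counts as a mutation at `v` when the moved box and the
next one have the same index and the moved box has the index and i-cardinality of `v`.
-/

open scoped Classical

/-- The box move `ν_s` on the encoding `(c, E)` of a chain of i-boxes. -/
def boxMove (s : ℕ) (p : ℤ × (ℕ → Bool)) : ℤ × (ℕ → Bool) :=
  (if s = 1 then (if p.2 1 then p.1 + 1 else p.1 - 1) else p.1,
   fun k => if k = s - 1 ∨ k = s then !(p.2 k) else p.2 k)

/-- Right endpoint of the union of the first `s` boxes of the chain encoded by `p`. -/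
def hiC (p : ℤ × (ℕ → Bool)) (s : ℕ) : ℤ :=
  p.1 + (((Finset.Ico 1 s).filter (fun t => p.2 t = true)).card : ℤ)

/-- Left endpoint of the union of the first `s` boxes of the chain encoded by `p`. -/
def loC (p : ℤ × (ℕ → Bool)) (s : ℕ) : ℤ :=
  p.1 - (((Finset.Ico 1 s).filter (fun t => p.2 t = false)).card : ℤ)

/-- The index of the box at position `s ≥ 1` of the chain encoded by `p`. -/
noncomputable def idx {I : Type} (ι : ℤ → I) (p : ℤ × (ℕ → Bool)) (s : ℕ) : I :=
  if s ≤ 1 then ι p.1 else if p.2 (s - 1) then ι (hiC p s) else ι (loC p s)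

/-- The i-cardinality of the box at position `s` of the chain encoded by `p` (the
number of occurrences of its index in the union of the first `s` boxes). -/
noncomputable def cardB {I : Type} (ι : ℤ → I) (p : ℤ × (ℕ → Bool)) (s : ℕ) : ℕ :=
  ((Finset.Icc (loC p s) (hiC p s)).filter (fun t => ι t = idx ι p s)).card

/-- The list of positions of the box moves performed by the canonical chain
transformation `𝔠₋^{[a,b]} ↦ 𝔠`, where `𝔠` has expansion operators `E` on the
positions `1, …, l-1`: for each right operator, from the last to the first, the box
moves at positions `1, 2, …, k_j`. -/
def canonicalMoves (l : ℕ) (E : ℕ → Bool) : List ℕ :=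
  ((((List.range l).filter (fun t => E t)).reverse.map
      (fun kj => (List.range kj).map (· + 1))).foldr (· ++ ·) [])

/-- The number of mutations at the vertex of index `i₀` and i-cardinality `κ₀` in the
mutation sequence associated with the canonical chain transformation: the number of box
moves in the canonical sequence which move a box of index `i₀` and i-cardinality `κ₀`
into a box of the same index. -/
noncomputable def mutationCount {I : Type} (ι : ℤ → I) (b : ℤ) (l : ℕ) (E : ℕ → Bool)
    (i₀ : I) (κ₀ : ℕ) : ℕ :=
  (((canonicalMoves l E).zip
      (List.scanl (fun p s => boxMove s p) ((b, fun _ => false) : ℤ × (ℕ → Bool))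
        (canonicalMoves l E))).countP
    (fun x => decide (idx ι x.2 x.1 = idx ι x.2 (x.1 + 1) ∧
      idx ι x.2 x.1 = i₀ ∧ cardB ι x.2 x.1 = κ₀)))

namespace NumbMut

open Finset

variable {I : Type} (ι : ℤ → I) (i₀ : I) (κ₀ : ℕ)

lemma hiC_mono (p : ℤ × (ℕ → Bool)) {s s' : ℕ} (h : s ≤ s') : hiC p s ≤ hiC p s' := by
  unfold hiC
  have := Finset.card_le_card (Finset.filter_subset_filter (fun t => p.2 t = true)
    (Finset.Ico_subset_Ico_right (a := 1) h))
  omega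

lemma loC_anti (p : ℤ × (ℕ → Bool)) {s s' : ℕ} (h : s ≤ s') : loC p s' ≤ loC p s := by
  unfold loC
  have := Finset.card_le_card (Finset.filter_subset_filter (fun t => p.2 t = false)
    (Finset.Ico_subset_Ico_right (a := 1) h))
  omega

lemma hiC_sub_loC (p : ℤ × (ℕ → Bool)) (s : ℕ) :
    hiC p s - loC p s = ((s : ℤ) - 1).toNat := by
  unfold hiC loC
  have h := Finset.card_filter_add_card_filter_not (s := Finset.Ico 1 s)
    (p := fun t => p.2 t = true)
  have h2 : (Finset.Ico 1 s).filter (fun t => ¬ (p.2 t = true)) =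
      (Finset.Ico 1 s).filter (fun t => p.2 t = false) := by
    apply Finset.filter_congr; intro t _; simp
  rw [h2] at h
  have h3 : (Finset.Ico 1 s).card = s - 1 := by simp
  omega

lemma hiC_one (p : ℤ × (ℕ → Bool)) : hiC p 1 = p.1 := by simp [hiC]

lemma loC_one (p : ℤ × (ℕ → Bool)) : loC p 1 = p.1 := by simp [loC]

lemma hiC_succ_le (p : ℤ × (ℕ → Bool)) (s : ℕ) : hiC p (s + 1) ≤ hiC p s + 1 := by
  unfold hiC
  have hsub : (Finset.Ico 1 (s+1)).filter (fun t => p.2 t = true) ⊆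
      insert s ((Finset.Ico 1 s).filter (fun t => p.2 t = true)) := by
    intro t ht
    simp only [Finset.mem_filter, Finset.mem_Ico, Finset.mem_insert] at *
    rcases ht with ⟨⟨h1, h2⟩, h3⟩
    by_cases hts : t = s
    · exact Or.inl hts
    · exact Or.inr ⟨⟨h1, by omega⟩, h3⟩
  have := Finset.card_le_card hsub
  have := Finset.card_insert_le s ((Finset.Ico 1 s).filter (fun t => p.2 t = true))
  omega

end NumbMut

namespace NumbMut

variable {I : Type} (ι : ℤ → I) (i₀ : I) (κ₀ : ℕ)

/-- The mutation predicate. -/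
noncomputable def Pm (x : ℕ × (ℤ × (ℕ → Bool))) : Bool :=
  decide (idx ι x.2 x.1 = idx ι x.2 (x.1 + 1) ∧
      idx ι x.2 x.1 = i₀ ∧ cardB ι x.2 x.1 = κ₀)

/-- Mutation count along a list of moves starting from state `p`. -/
noncomputable def C (p : ℤ × (ℕ → Bool)) (L : List ℕ) : ℕ :=
  (L.zip (List.scanl (fun p s => boxMove s p) p L)).countP (Pm ι i₀ κ₀)

lemma mutationCount_eq_C (b : ℤ) (l : ℕ) (E : ℕ → Bool) :
    mutationCount ι b l E i₀ κ₀ = C ι i₀ κ₀ (b, fun _ => false) (canonicalMoves l E) := rfl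

lemma C_nil (p : ℤ × (ℕ → Bool)) : C ι i₀ κ₀ p [] = 0 := rfl

lemma C_cons (p : ℤ × (ℕ → Bool)) (s : ℕ) (L : List ℕ) :
    C ι i₀ κ₀ p (s :: L) =
      (if Pm ι i₀ κ₀ (s, p) then 1 else 0) + C ι i₀ κ₀ (boxMove s p) L := by
  unfold C
  rw [List.scanl_cons, List.zip_cons_cons, List.countP_cons]
  omega

lemma C_append (p : ℤ × (ℕ → Bool)) (L₁ L₂ : List ℕ) :
    C ι i₀ κ₀ p (L₁ ++ L₂) =
      C ι i₀ κ₀ p L₁ + C ι i₀ κ₀ (L₁.foldl (fun q s => boxMove s q) p) L₂ := by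
  induction L₁ generalizing p with
  | nil => simp [C_nil]
  | cons s L₁ ih =>
      rw [List.cons_append, C_cons, C_cons, List.foldl_cons, ih]
      omega

lemma C_singleton (p : ℤ × (ℕ → Bool)) (s : ℕ) :
    C ι i₀ κ₀ p [s] = (if Pm ι i₀ κ₀ (s, p) then 1 else 0) := by
  rw [C_cons, C_nil]; omega

end NumbMut

namespace NumbMut

variable {I : Type} (ι : ℤ → I) (i₀ : I) (κ₀ : ℕ)

def block (k : ℕ) : List ℕ := (List.range k).map (· + 1)

def tog (q : ℤ × (ℕ → Bool)) (k : ℕ) : ℤ × (ℕ → Bool) :=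
  (q.1 - 1, fun t => if t = 0 ∨ t = k then !(q.2 t) else q.2 t)

lemma block_succ (k : ℕ) : block (k + 1) = block k ++ [k + 1] := by
  unfold block
  rw [List.range_succ, List.map_append]
  rfl

lemma foldl_block (q : ℤ × (ℕ → Bool)) (k : ℕ) (hk : 1 ≤ k)
    (hq : ∀ t, 1 ≤ t → t ≤ k → q.2 t = false) :
    (block k).foldl (fun p s => boxMove s p) q = tog q k := by
  induction k with
  | zero => omega
  | succ k ih =>
    rcases Nat.eq_or_lt_of_le hk with h1 | h2
    · -- k + 1 = 1
      have hk0 : k = 0 := by omega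
      subst hk0
      show boxMove 1 q = tog q 1
      unfold boxMove tog
      rw [hq 1 le_rfl le_rfl]
      simp
    · have hk1 : 1 ≤ k := by omega
      rw [block_succ, List.foldl_append, ih hk1 (fun t h1 h2 => hq t h1 (by omega))]
      show boxMove (k+1) (tog q k) = tog q (k+1)
      unfold boxMove tog
      have hne : ¬ (k + 1 = 1) := by omega
      simp only [hne, if_false]
      simp only [Prod.mk.injEq]
      refine ⟨trivial, ?_⟩
      funext t
      simp only [Nat.add_sub_cancel]
      by_cases h0 : t = 0
      · have h1 : ¬ (t = k ∨ t = k + 1) := by omega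
        have h2 : (t = 0 ∨ t = k) ↔ True := by tauto
        have h3 : (t = 0 ∨ t = k + 1) ↔ True := by tauto
        simp [h1, h2, h3]
      · by_cases hk' : t = k
        · have h1 : (t = k ∨ t = k + 1) ↔ True := by tauto
          have h2 : (t = 0 ∨ t = k) ↔ True := by tauto
          have h3 : ¬ (t = 0 ∨ t = k + 1) := by omega
          simp [h1, h2, h3]
        · by_cases hk2 : t = k + 1
          · have h1 : (t = k ∨ t = k + 1) ↔ True := by tauto
            have h2 : ¬ (t = 0 ∨ t = k) := by omega
            have h3 : (t = 0 ∨ t = k + 1) ↔ True := by tauto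
            simp [h1, h2, h3]
          · have h1 : ¬ (t = k ∨ t = k + 1) := by omega
            have h2 : ¬ (t = 0 ∨ t = k) := by omega
            have h3 : ¬ (t = 0 ∨ t = k + 1) := by omega
            simp [h1, h2, h3]

end NumbMut

namespace NumbMut

variable {I : Type} (ι : ℤ → I) (i₀ : I) (κ₀ : ℕ)

/-- The abstract mutation condition for the box move at position `s` during the pass
with current root `x`. -/
def Cnd (x : ℤ) (s : ℕ) : Prop :=
  ι x = ι (x - s) ∧ ι x = i₀ ∧
    ((Finset.Icc (x - s + 1) x).filter (fun t => ι t = ι x)).card = κ₀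

lemma evalP_one (q : ℤ × (ℕ → Bool)) (hq1 : q.2 1 = false) :
    (Pm ι i₀ κ₀ (1, q) = true) ↔ Cnd ι i₀ κ₀ q.1 1 := by
  unfold Pm Cnd
  rw [decide_eq_true_iff]
  have hidx1 : idx ι q 1 = ι q.1 := by unfold idx; simp
  have hIco : (Finset.Ico 1 2).filter (fun t => q.2 t = false) = {1} := by
    have h12 : Finset.Ico 1 2 = {1} := by decide
    rw [h12, Finset.filter_singleton, if_pos hq1]
  have hlo : loC q 2 = q.1 - 1 := by
    unfold loC; rw [hIco]; simp
  have hidx2 : idx ι q 2 = ι (q.1 - 1) := by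
    unfold idx
    have : ¬ ((2:ℕ) ≤ 1) := by omega
    rw [if_neg this]
    show (if q.2 1 = true then _ else _) = _
    rw [hq1]
    simp [hlo]
  have hcard : cardB ι q 1 =
      ((Finset.Icc (q.1 - (1:ℕ) + 1) q.1).filter (fun t => ι t = ι q.1)).card := by
    unfold cardB
    rw [loC_one, hiC_one, hidx1]
    norm_num
  rw [hidx1, hidx2, hcard]
  norm_num

lemma tog_val (q : ℤ × (ℕ → Bool)) (j t : ℕ) (ht : 1 ≤ t) :
    (tog q j).2 t = if t = j then !(q.2 t) else q.2 t := by
  unfold tog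
  simp only
  by_cases h : t = j
  · have h' : (t = 0 ∨ t = j) := Or.inr h
    simp [h', h]
  · have h' : ¬ (t = 0 ∨ t = j) := by omega
    simp only [h', if_false, if_neg h]

lemma evalP_big (q : ℤ × (ℕ → Bool)) (k s : ℕ) (h2 : 2 ≤ s) (hsk : s ≤ k)
    (hq : ∀ t, 1 ≤ t → t ≤ k → q.2 t = false) :
    (Pm ι i₀ κ₀ (s, tog q (s-1)) = true) ↔ Cnd ι i₀ κ₀ q.1 s := by
  set p := tog q (s-1) with hp
  have hval : ∀ t, 1 ≤ t → t ≤ k → (p.2 t = true ↔ t = s - 1) := by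
    intro t h1t htk
    rw [hp, tog_val q (s-1) t h1t]
    by_cases h : t = s - 1
    · subst h; simp [hq _ h1t htk]
    · simp [h, hq t h1t htk]
  -- true filter over Ico 1 s
  have htf : ∀ u : ℕ, s ≤ u → u ≤ k + 1 →
      (Finset.Ico 1 u).filter (fun t => p.2 t = true) = {s - 1} := by
    intro u hsu huk
    ext t
    simp only [Finset.mem_filter, Finset.mem_Ico, Finset.mem_singleton]
    constructor
    · rintro ⟨⟨h1t, htu⟩, hpt⟩
      exact (hval t h1t (by omega)).1 hpt
    · intro h
      have h1t : 1 ≤ t := by omega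
      refine ⟨⟨h1t, by omega⟩, (hval t h1t (by omega)).2 h⟩
  have hcard_false : ∀ u : ℕ, s ≤ u → u ≤ k + 1 →
      ((Finset.Ico 1 u).filter (fun t => p.2 t = false)).card = u - 2 := by
    intro u hsu huk
    have h := Finset.card_filter_add_card_filter_not (s := Finset.Ico 1 u)
      (p := fun t => p.2 t = true)
    have h2' : (Finset.Ico 1 u).filter (fun t => ¬ (p.2 t = true)) =
        (Finset.Ico 1 u).filter (fun t => p.2 t = false) := by
      apply Finset.filter_congr; intro t _; simp
    rw [h2', htf u hsu huk] at h
    have h3 : (Finset.Ico 1 u).card = u - 1 := by simp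
    simp at h
    omega
  have hhiC : hiC p s = q.1 := by
    unfold hiC
    rw [htf s le_rfl (by omega)]
    have : p.1 = q.1 - 1 := rfl
    simp [this]
  have hloC : loC p s = q.1 - s + 1 := by
    unfold loC
    rw [hcard_false s le_rfl (by omega)]
    have h1 : p.1 = q.1 - 1 := rfl
    rw [h1]
    omega
  have hloC1 : loC p (s+1) = q.1 - s := by
    unfold loC
    rw [hcard_false (s+1) (by omega) (by omega)]
    have h1 : p.1 = q.1 - 1 := rfl
    rw [h1]
    omega
  have hidxs : idx ι p s = ι q.1 := by
    unfold idx
    have hns : ¬ (s ≤ 1) := by omega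
    rw [if_neg hns]
    have : p.2 (s - 1) = true := (hval (s-1) (by omega) (by omega)).2 rfl
    rw [this, if_pos rfl, hhiC]
  have hidxs1 : idx ι p (s+1) = ι (q.1 - s) := by
    unfold idx
    have hns : ¬ (s + 1 ≤ 1) := by omega
    rw [if_neg hns]
    have hps : p.2 (s + 1 - 1) = false := by
      have h1 : s + 1 - 1 = s := by omega
      rw [h1]
      by_contra hcon
      have := (hval s (by omega) hsk).1 (by revert hcon; cases (p.2 s) <;> simp)
      omega
    rw [hps]
    simp [hloC1]
  have hcardB : cardB ι p s =
      ((Finset.Icc (q.1 - s + 1) q.1).filter (fun t => ι t = ι q.1)).card := by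
    unfold cardB
    rw [hloC, hhiC, hidxs]
  unfold Pm Cnd
  rw [decide_eq_true_iff, hidxs, hidxs1, hcardB]

end NumbMut

namespace NumbMut

variable {I : Type} (ι : ℤ → I) (i₀ : I) (κ₀ : ℕ)

lemma C_block (q : ℤ × (ℕ → Bool)) (k : ℕ)
    (hq : ∀ t, 1 ≤ t → t ≤ k → q.2 t = false) :
    C ι i₀ κ₀ q (block k) =
      ((Finset.Icc 1 k).filter (fun s => Cnd ι i₀ κ₀ q.1 s)).card := by
  induction k with
  | zero =>
      show C ι i₀ κ₀ q [] = _
      rw [C_nil]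
      simp
  | succ k ih =>
      have hq' : ∀ t, 1 ≤ t → t ≤ k → q.2 t = false := fun t h1 h2 => hq t h1 (by omega)
      rw [block_succ, C_append, C_singleton, ih hq']
      have hstate : (block k).foldl (fun p s => boxMove s p) q =
          if k = 0 then q else tog q k := by
        by_cases hk : k = 0
        · subst hk; simp [block]
        · rw [if_neg hk]; exact foldl_block q k (by omega) hq'
      have hPm : (Pm ι i₀ κ₀ (k + 1, (block k).foldl (fun p s => boxMove s p) q) = true)
          ↔ Cnd ι i₀ κ₀ q.1 (k+1) := by
        by_cases hk : k = 0
        · subst hk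
          rw [hstate]
          simp only [if_pos rfl]
          exact evalP_one ι i₀ κ₀ q (hq 1 le_rfl le_rfl)
        · rw [hstate, if_neg hk]
          have hk1 : k = (k + 1) - 1 := by omega
          rw [show tog q k = tog q ((k+1)-1) from by rw [← hk1]]
          exact evalP_big ι i₀ κ₀ q (k+1) (k+1) (by omega) le_rfl hq
      have hsplit : (Finset.Icc 1 (k+1)).filter (fun s => Cnd ι i₀ κ₀ q.1 s) =
          if Cnd ι i₀ κ₀ q.1 (k+1)
          then insert (k+1) ((Finset.Icc 1 k).filter (fun s => Cnd ι i₀ κ₀ q.1 s))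
          else (Finset.Icc 1 k).filter (fun s => Cnd ι i₀ κ₀ q.1 s) := by
        have hIcc : Finset.Icc 1 (k+1) = insert (k+1) (Finset.Icc 1 k) := by
          ext t; simp [Finset.mem_Icc, Finset.mem_insert]; omega
        rw [hIcc, Finset.filter_insert]
      rw [hsplit]
      by_cases hcnd : Cnd ι i₀ κ₀ q.1 (k+1)
      · rw [if_pos hcnd, if_pos (hPm.2 hcnd)]
        rw [Finset.card_insert_of_notMem (by simp [Finset.mem_filter])]
      · rw [if_neg hcnd, if_neg (fun h => hcnd (hPm.1 h))]
        omega

/-- Sum of per-pass mutation counts. -/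
noncomputable def G : ℤ → List ℕ → ℕ
  | _, [] => 0
  | x, k :: K => ((Finset.Icc 1 k).filter (fun s => Cnd ι i₀ κ₀ x s)).card + G (x - 1) K

lemma C_chain (K : List ℕ) (hK : List.Pairwise (· > ·) K) (h1 : ∀ k ∈ K, 1 ≤ k)
    (q : ℤ × (ℕ → Bool)) (hq : ∀ k ∈ K, ∀ t, 1 ≤ t → t ≤ k → q.2 t = false) :
    C ι i₀ κ₀ q ((K.map block).foldr (· ++ ·) []) = G ι i₀ κ₀ q.1 K := by
  induction K generalizing q with
  | nil => show C ι i₀ κ₀ q [] = 0; exact C_nil ι i₀ κ₀ q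
  | cons k K ih =>
      have hk1 : 1 ≤ k := h1 k (by simp)
      have hqk : ∀ t, 1 ≤ t → t ≤ k → q.2 t = false :=
        fun t a b => hq k (by simp) t a b
      show C ι i₀ κ₀ q (block k ++ (K.map block).foldr (· ++ ·) []) = _
      rw [C_append, C_block ι i₀ κ₀ q k hqk, foldl_block q k hk1 hqk]
      show _ = _ + G ι i₀ κ₀ (q.1 - 1) K
      have htog1 : (tog q k).1 = q.1 - 1 := rfl
      rw [← htog1]
      congr 1
      apply ih (hK.of_cons) (fun k' hk' => h1 k' (by simp [hk']))
      intro k' hk' t h1t htk'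
      have hk'k : k' < k := (List.pairwise_cons.1 hK).1 k' hk'
      rw [tog_val q k t h1t, if_neg (by omega)]
      exact hq k' (by simp [hk']) t h1t htk'

end NumbMut

namespace NumbMut

variable {I : Type} (ι : ℤ → I) (i₀ : I) (κ₀ : ℕ)

lemma cnd_not_lt (x : ℤ) {s s' : ℕ} (hs : 1 ≤ s) (hss' : s < s')
    (h : Cnd ι i₀ κ₀ x s) (h' : Cnd ι i₀ κ₀ x s') : False := by
  obtain ⟨h1, h2, h3⟩ := h
  obtain ⟨h1', h2', h3'⟩ := h'
  have hsub : insert (x - s) ((Finset.Icc (x - s + 1) x).filter (fun t => ι t = ι x)) ⊆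
      (Finset.Icc (x - s' + 1) x).filter (fun t => ι t = ι x) := by
    intro t ht
    rcases Finset.mem_insert.1 ht with h | h
    · subst h
      refine Finset.mem_filter.2 ⟨Finset.mem_Icc.2 ⟨by omega, by omega⟩, h1.symm⟩
    · obtain ⟨hmem, hval⟩ := Finset.mem_filter.1 h
      rw [Finset.mem_Icc] at hmem
      exact Finset.mem_filter.2 ⟨Finset.mem_Icc.2 ⟨by omega, hmem.2⟩, hval⟩
  have hnm : x - s ∉ (Finset.Icc (x - s + 1) x).filter (fun t => ι t = ι x) := by
    intro hmem
    have := (Finset.mem_filter.1 hmem).1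
    rw [Finset.mem_Icc] at this
    omega
  have := Finset.card_le_card hsub
  rw [Finset.card_insert_of_notMem hnm, h3, h3'] at this
  omega

lemma cnd_unique (x : ℤ) {s s' : ℕ} (hs : 1 ≤ s) (hs' : 1 ≤ s')
    (h : Cnd ι i₀ κ₀ x s) (h' : Cnd ι i₀ κ₀ x s') : s = s' := by
  rcases Nat.lt_trichotomy s s' with hlt | heq | hgt
  · exact absurd (cnd_not_lt ι i₀ κ₀ x hs hlt h h') (by simp)
  · exact heq
  · exact absurd (cnd_not_lt ι i₀ κ₀ x hs' hgt h' h) (by simp)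

lemma card_pass (x : ℤ) (k : ℕ) :
    ((Finset.Icc 1 k).filter (fun s => Cnd ι i₀ κ₀ x s)).card =
      if (∃ s : ℕ, 1 ≤ s ∧ s ≤ k ∧ Cnd ι i₀ κ₀ x s) then 1 else 0 := by
  by_cases hex : ∃ s : ℕ, 1 ≤ s ∧ s ≤ k ∧ Cnd ι i₀ κ₀ x s
  · obtain ⟨s, hs1, hsk, hcnd⟩ := hex
    rw [if_pos ⟨s, hs1, hsk, hcnd⟩]
    have : (Finset.Icc 1 k).filter (fun s => Cnd ι i₀ κ₀ x s) = {s} := by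
      ext t
      simp only [Finset.mem_filter, Finset.mem_Icc, Finset.mem_singleton]
      constructor
      · rintro ⟨⟨h1, h2⟩, h3⟩
        exact cnd_unique ι i₀ κ₀ x h1 hs1 h3 hcnd
      · rintro rfl
        exact ⟨⟨hs1, hsk⟩, hcnd⟩
    rw [this, Finset.card_singleton]
  · rw [if_neg hex]
    rw [Finset.card_eq_zero, Finset.filter_eq_empty_iff]
    intro t ht
    rw [Finset.mem_Icc] at ht
    exact fun hc => hex ⟨t, ht.1, ht.2, hc⟩

lemma countP_range (p : ℕ → Bool) (n : ℕ) :
    (List.range n).countP p = ((Finset.range n).filter (fun t => p t = true)).card := by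
  induction n with
  | zero => simp
  | succ n ih =>
      rw [List.range_succ, List.countP_append, Finset.range_add_one, Finset.filter_insert, ih]
      by_cases hp : p n = true
      · rw [if_pos hp, Finset.card_insert_of_notMem (by simp)]
        simp [hp]
      · rw [if_neg hp]
        simp [List.countP_cons, hp]

lemma G_formula (K : List ℕ) (hK : List.Pairwise (· > ·) K) (x : ℤ) :
    G ι i₀ κ₀ x K = ((Finset.Ioc (x - K.length) x).filter
      (fun x' => ∃ s : ℕ, 1 ≤ s ∧ Cnd ι i₀ κ₀ x' s ∧
        x - x' + 1 ≤ (K.countP (fun kk => decide (s ≤ kk)) : ℤ))).card := by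
  induction K generalizing x with
  | nil => simp [G]
  | cons k K ih =>
      have hmax : ∀ k' ∈ K, k' < k := (List.pairwise_cons.1 hK).1
      show ((Finset.Icc 1 k).filter (fun s => Cnd ι i₀ κ₀ x s)).card + G ι i₀ κ₀ (x-1) K = _
      rw [card_pass, ih (List.pairwise_cons.1 hK).2 (x-1)]
      have hlen : ((k :: K).length : ℤ) = (K.length : ℤ) + 1 := by simp
      have hins : Finset.Ioc (x - ((k :: K).length : ℤ)) x =
          insert x (Finset.Ioc ((x - 1) - (K.length : ℤ)) (x-1)) := by
        ext t
        simp only [Finset.mem_Ioc, Finset.mem_insert, hlen]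
        omega
      rw [hins, Finset.filter_insert]
      -- head condition equivalence
      have hhead : (∃ s : ℕ, 1 ≤ s ∧ Cnd ι i₀ κ₀ x s ∧
          x - x + 1 ≤ ((k :: K).countP (fun kk => decide (s ≤ kk)) : ℤ)) ↔
          (∃ s : ℕ, 1 ≤ s ∧ s ≤ k ∧ Cnd ι i₀ κ₀ x s) := by
        constructor
        · rintro ⟨s, hs1, hcnd, hcount⟩
          refine ⟨s, hs1, ?_, hcnd⟩
          have : 0 < (k :: K).countP (fun kk => decide (s ≤ kk)) := by omega
          obtain ⟨a, ha, hpa⟩ := List.countP_pos_iff.1 this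
          have hsa : s ≤ a := of_decide_eq_true hpa
          rcases List.mem_cons.1 ha with rfl | hmem
          · exact hsa
          · exact le_of_lt (lt_of_le_of_lt hsa (hmax a hmem))
        · rintro ⟨s, hs1, hsk, hcnd⟩
          refine ⟨s, hs1, hcnd, ?_⟩
          have : 0 < (k :: K).countP (fun kk => decide (s ≤ kk)) :=
            List.countP_pos_iff.2 ⟨k, by simp, decide_eq_true hsk⟩
          omega
      -- tail condition equivalence
      have htail : ∀ x' ∈ Finset.Ioc ((x - 1) - (K.length : ℤ)) (x - 1),
          ((∃ s : ℕ, 1 ≤ s ∧ Cnd ι i₀ κ₀ x' s ∧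
            x - x' + 1 ≤ ((k :: K).countP (fun kk => decide (s ≤ kk)) : ℤ)) ↔
          (∃ s : ℕ, 1 ≤ s ∧ Cnd ι i₀ κ₀ x' s ∧
            (x - 1) - x' + 1 ≤ (K.countP (fun kk => decide (s ≤ kk)) : ℤ))) := by
        intro x' hx'
        rw [Finset.mem_Ioc] at hx'
        constructor
        · rintro ⟨s, hs1, hcnd, hcount⟩
          refine ⟨s, hs1, hcnd, ?_⟩
          by_cases hsk : s ≤ k
          · have hcc : (k :: K).countP (fun kk => decide (s ≤ kk)) =
                K.countP (fun kk => decide (s ≤ kk)) + 1 := by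
              rw [List.countP_cons]; simp [hsk]
            rw [hcc] at hcount
            push_cast at hcount ⊢
            omega
          · have hz' : (k :: K).countP (fun kk => decide (s ≤ kk)) = 0 := by
              rw [List.countP_eq_zero]
              intro a ha
              simp only [decide_eq_true_eq]
              intro hsa
              rcases List.mem_cons.1 ha with rfl | hmem
              · exact hsk hsa
              · exact hsk (le_of_lt (lt_of_le_of_lt hsa (hmax a hmem)))
            rw [hz'] at hcount
            exact absurd hcount (by push_cast; omega)
        · rintro ⟨s, hs1, hcnd, hcount⟩
          refine ⟨s, hs1, hcnd, ?_⟩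
          have hpos : 0 < K.countP (fun kk => decide (s ≤ kk)) := by
            by_contra hc
            push_neg at hc
            interval_cases h : K.countP (fun kk => decide (s ≤ kk)) <;> omega
          obtain ⟨a, ha, hpa⟩ := List.countP_pos_iff.1 hpos
          have hsk : s ≤ k := le_of_lt (lt_of_le_of_lt (of_decide_eq_true hpa) (hmax a ha))
          rw [List.countP_cons]
          simp only [decide_eq_true hsk]
          push_cast
          omega
      rw [Finset.filter_congr htail]
      by_cases hx : (∃ s : ℕ, 1 ≤ s ∧ Cnd ι i₀ κ₀ x s ∧
          x - x + 1 ≤ ((k :: K).countP (fun kk => decide (s ≤ kk)) : ℤ))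
      · rw [if_pos hx, if_pos (hhead.1 hx)]
        rw [Finset.card_insert_of_notMem (by
          intro hmem
          have := (Finset.mem_filter.1 hmem).1
          rw [Finset.mem_Ioc] at this
          omega)]
        omega
      · rw [if_neg hx, if_neg (fun h => hx (hhead.2 h))]
        omega

end NumbMut

namespace NumbMut

lemma exists_occ (P : ℤ → Prop) [DecidablePred P] (n : ℕ) :
    ∀ (N : ℕ) (u x : ℤ), (x - u).toNat ≤ N →
      (n + 1) ≤ ((Finset.Ioc u x).filter P).card →
      ∃ z, u < z ∧ z ≤ x ∧ P z ∧ ((Finset.Ioc z x).filter P).card = n := by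
  intro N
  induction N with
  | zero =>
      intro u x h1 h2
      have hxu : x ≤ u := by omega
      rw [Finset.Ioc_eq_empty_of_le hxu] at h2
      simp at h2
  | succ N ih =>
      intro u x h1 h2
      have hux : u < x := by
        by_contra hc
        push_neg at hc
        rw [Finset.Ioc_eq_empty_of_le hc] at h2
        simp at h2
      have hsplit : Finset.Ioc u x = insert (u+1) (Finset.Ioc (u+1) x) := by
        ext t
        simp only [Finset.mem_Ioc, Finset.mem_insert]
        omega
      rw [hsplit, Finset.filter_insert] at h2
      by_cases hP : P (u+1)
      · rw [if_pos hP, Finset.card_insert_of_notMem (by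
          intro hmem
          have := (Finset.mem_filter.1 hmem).1
          rw [Finset.mem_Ioc] at this
          omega)] at h2
        by_cases hn : ((Finset.Ioc (u+1) x).filter P).card = n
        · exact ⟨u+1, by omega, by omega, hP, hn⟩
        · obtain ⟨z, hz1, hz2, hz3, hz4⟩ := ih (u+1) x (by omega) (by omega)
          exact ⟨z, by omega, hz2, hz3, hz4⟩
      · rw [if_neg hP] at h2
        obtain ⟨z, hz1, hz2, hz3, hz4⟩ := ih (u+1) x (by omega) h2
        exact ⟨z, by omega, hz2, hz3, hz4⟩

lemma count_ge (l : ℕ) (E : ℕ → Bool) (hE : ∀ t : ℕ, (t = 0 ∨ l ≤ t) → E t = false)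
    (croot b : ℤ)
    (hcroot : croot = b - (((Finset.Ico 1 l).filter (fun t => E t = true)).card : ℤ))
    (s : ℕ) (hs : 1 ≤ s) :
    (((((List.range l).filter (fun t => E t)).reverse).countP
        (fun kk => decide (s ≤ kk)) : ℤ)) = b - hiC (croot, E) s := by
  have h0 : (((List.range l).filter (fun t => E t)).reverse).countP (fun kk => decide (s ≤ kk))
      = ((List.range l).filter (fun t => E t)).countP (fun kk => decide (s ≤ kk)) := by
    rw [List.countP_eq_length_filter, List.countP_eq_length_filter, List.filter_reverse,
      List.length_reverse]
  have h1 : ((List.range l).filter (fun t => E t)).countP (fun kk => decide (s ≤ kk))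
      = (List.range l).countP (fun t => decide (s ≤ t) && E t) :=
    List.countP_filter
  rw [h0, h1, countP_range]
  -- identify with the finset count
  have hA : (Finset.range l).filter (fun t => (decide (s ≤ t) && E t) = true) =
      ((Finset.Ico 1 l).filter (fun t => E t = true)).filter (fun t => s ≤ t) := by
    ext t
    simp only [Finset.mem_filter, Finset.mem_range, Finset.mem_Ico, Bool.and_eq_true,
      decide_eq_true_eq]
    constructor
    · rintro ⟨htl, hst, hEt⟩
      exact ⟨⟨⟨by omega, htl⟩, hEt⟩, hst⟩
    · rintro ⟨⟨⟨h1t, htl⟩, hEt⟩, hst⟩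
      exact ⟨htl, hst, hEt⟩
  have hB : ((Finset.Ico 1 l).filter (fun t => E t = true)).filter (fun t => ¬ s ≤ t) =
      (Finset.Ico 1 s).filter (fun t => E t = true) := by
    ext t
    simp only [Finset.mem_filter, Finset.mem_Ico, not_le]
    constructor
    · rintro ⟨⟨⟨h1t, htl⟩, hEt⟩, hts⟩
      exact ⟨⟨h1t, hts⟩, hEt⟩
    · rintro ⟨⟨h1t, hts⟩, hEt⟩
      refine ⟨⟨⟨h1t, ?_⟩, hEt⟩, hts⟩
      by_contra hc
      rw [hE t (Or.inr (by omega))] at hEt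
      exact Bool.false_ne_true hEt
  have hsum := Finset.card_filter_add_card_filter_not
    (s := (Finset.Ico 1 l).filter (fun t => E t = true)) (p := fun t => s ≤ t)
  rw [hB] at hsum
  have hhiC : hiC (croot, E) s = croot +
      (((Finset.Ico 1 s).filter (fun t => E t = true)).card : ℤ) := rfl
  rw [hA, hhiC, hcroot]
  push_cast
  omega

end NumbMut

theorem number_of_mutations
    {I : Type} (ι : ℤ → I)
    (a b : ℤ) (hab : a ≤ b) (l : ℕ) (hl : (l : ℤ) = b - a + 1)
    -- the chain `𝔠`, encoded by its expansion operators `E` (supported on `[1, l-1]`)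
    -- and its root `b - |{k | E k = R}|`
    (E : ℕ → Bool) (hE : ∀ t : ℕ, (t = 0 ∨ l ≤ t) → E t = false)
    (croot : ℤ)
    (hcroot : croot = b - (((Finset.Ico 1 l).filter (fun t => E t = true)).card : ℤ))
    -- `[cc, dd]` is an i-box of `𝔠` of index `i₀` and i-cardinality `κ₀`
    (i₀ : I) (κ₀ : ℕ) (cc dd : ℤ)
    (hcd : cc ≤ dd ∧ ι cc = i₀ ∧ ι dd = i₀ ∧
      ((Finset.Icc cc dd).filter (fun t => ι t = i₀)).card = κ₀)
    (hbox : ∃ s : ℕ, 1 ≤ s ∧ s ≤ l ∧ idx ι (croot, E) s = i₀ ∧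
      cardB ι (croot, E) s = κ₀ ∧
      loC (croot, E) s ≤ dd ∧ dd ≤ hiC (croot, E) s ∧
      ∀ t : ℤ, dd < t → t ≤ hiC (croot, E) s → ι t ≠ i₀)
    -- `m` is the integer with `[cc,dd] = τ^{-m} [e, b(i₀)⁻]`: the number of
    -- occurrences of `i₀` in `(dd, b]`
    (m : ℕ) (hm : ((Finset.Ioc dd b).filter (fun t => ι t = i₀)).card = m) :
    mutationCount ι b l E i₀ κ₀ = m := by
  classical
  obtain ⟨hccdd, hicc, hidd, hccount⟩ := hcd
  obtain ⟨s₀, hs₀1, hs₀l, hidx₀, hcard₀, hlo₀, hhi₀, hnone⟩ := hbox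
  set K : List ℕ := ((List.range l).filter (fun t => E t)).reverse with hKdef
  have hKmem : ∀ k ∈ K, 1 ≤ k ∧ k < l := by
    intro k hk
    rw [hKdef, List.mem_reverse, List.mem_filter, List.mem_range] at hk
    refine ⟨?_, hk.1⟩
    by_contra hc
    push_neg at hc
    have h0 : k = 0 := by omega
    rw [h0, hE 0 (Or.inl rfl)] at hk
    exact absurd hk.2 (by simp)
  have hKsorted : List.Pairwise (· > ·) K := by
    rw [hKdef]
    exact List.pairwise_reverse.2 ((List.pairwise_lt_range (n := l)).filter _)
  -- Part A : the mutation count as a sum over passes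
  have hA : mutationCount ι b l E i₀ κ₀ = NumbMut.G ι i₀ κ₀ b K := by
    rw [NumbMut.mutationCount_eq_C]
    have hmoves : canonicalMoves l E = (K.map NumbMut.block).foldr (· ++ ·) [] := rfl
    rw [hmoves]
    exact NumbMut.C_chain ι i₀ κ₀ K hKsorted (fun k hk => (hKmem k hk).1)
      ((b, fun _ => false)) (fun k _ t _ _ => rfl)
  have hB := NumbMut.G_formula ι i₀ κ₀ K hKsorted b
  have hlen : (K.length : ℤ) = b - croot := by
    have h1 : K.length = (List.range l).countP (fun t => E t) := by
      rw [hKdef, List.length_reverse, List.countP_eq_length_filter]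
    have h2 : (Finset.range l).filter (fun t => E t = true) =
        (Finset.Ico 1 l).filter (fun t => E t = true) := by
      ext t
      simp only [Finset.mem_filter, Finset.mem_range, Finset.mem_Ico]
      constructor
      · rintro ⟨htl, hEt⟩
        refine ⟨⟨?_, htl⟩, hEt⟩
        by_contra hc
        have h0 : t = 0 := by omega
        rw [h0, hE 0 (Or.inl rfl)] at hEt
        exact absurd hEt (by simp)
      · rintro ⟨⟨h1t, htl⟩, hEt⟩
        exact ⟨htl, hEt⟩
    rw [h1, NumbMut.countP_range, h2, hcroot]
    omega
  have hc2 : b - (K.length : ℤ) = croot := by omega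
  rw [hA, hB, hc2, ← hm]
  -- auxiliary facts
  have hKcount : ∀ s : ℕ, 1 ≤ s →
      ((K.countP (fun kk => decide (s ≤ kk)) : ℤ)) = b - hiC (croot, E) s :=
    fun s hs => NumbMut.count_ge l E hE croot b hcroot s hs
  have F1 : ((Finset.Icc (loC (croot, E) s₀) (hiC (croot, E) s₀)).filter
      (fun t => ι t = i₀)).card = κ₀ := by
    unfold cardB at hcard₀
    simp only [hidx₀] at hcard₀
    exact hcard₀
  have hunion : Finset.Icc (loC (croot, E) s₀) (hiC (croot, E) s₀) =
      Finset.Icc (loC (croot, E) s₀) dd ∪ Finset.Ioc dd (hiC (croot, E) s₀) := by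
    ext u
    simp only [Finset.mem_Icc, Finset.mem_union, Finset.mem_Ioc]
    omega
  have hzero : (Finset.Ioc dd (hiC (croot, E) s₀)).filter (fun t => ι t = i₀) = ∅ := by
    rw [Finset.filter_eq_empty_iff]
    intro u hu
    rw [Finset.mem_Ioc] at hu
    exact hnone u hu.1 hu.2
  have F2 : ((Finset.Icc (loC (croot, E) s₀) dd).filter (fun t => ι t = i₀)).card = κ₀ := by
    rw [hunion, Finset.filter_union, hzero, Finset.union_empty] at F1
    exact F1
  have F3 : 1 ≤ κ₀ := by
    rw [← hccount]
    exact Finset.card_pos.2 ⟨cc,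
      Finset.mem_filter.2 ⟨Finset.mem_Icc.2 ⟨le_rfl, hccdd⟩, hicc⟩⟩
  have F4 : loC (croot, E) s₀ ≤ cc := by
    by_contra hc
    push_neg at hc
    have hsub : insert cc ((Finset.Icc (loC (croot, E) s₀) dd).filter (fun t => ι t = i₀)) ⊆
        (Finset.Icc cc dd).filter (fun t => ι t = i₀) := by
      intro u hu
      rcases Finset.mem_insert.1 hu with rfl | hu
      · exact Finset.mem_filter.2 ⟨Finset.mem_Icc.2 ⟨le_rfl, hccdd⟩, hicc⟩
      · obtain ⟨hmem, hval⟩ := Finset.mem_filter.1 hu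
        rw [Finset.mem_Icc] at hmem
        exact Finset.mem_filter.2 ⟨Finset.mem_Icc.2 ⟨by omega, hmem.2⟩, hval⟩
    have hnm : cc ∉ (Finset.Icc (loC (croot, E) s₀) dd).filter (fun t => ι t = i₀) := by
      intro hmem
      have := (Finset.mem_filter.1 hmem).1
      rw [Finset.mem_Icc] at this
      omega
    have hcard := Finset.card_le_card hsub
    rw [Finset.card_insert_of_notMem hnm, F2, hccount] at hcard
    omega
  have F5 : croot ≤ hiC (croot, E) s₀ := by
    have := NumbMut.hiC_mono (croot, E) hs₀1
    rw [NumbMut.hiC_one] at this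
    exact this
  have hocc_gt : ∀ u : ℤ, dd < u → ι u = i₀ → hiC (croot, E) s₀ < u := by
    intro u h1 h2
    by_contra hcu
    push_neg at hcu
    exact hnone u h1 hcu h2
  congr 1
  ext t
  simp only [Finset.mem_filter, Finset.mem_Ioc]
  constructor
  · -- mutation happens at pass of t ⇒ t is an occurrence above dd
    rintro ⟨⟨hct, htb⟩, s, hs1, ⟨hcnd1, hcnd2, hcnd3⟩, hcount⟩
    refine ⟨⟨?_, htb⟩, hcnd2⟩
    by_contra hc
    push_neg at hc
    rw [hKcount s hs1] at hcount
    have hhiCs : hiC (croot, E) s ≤ t - 1 := by omega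
    have hyi : ι (t - (s:ℤ)) = i₀ := by rw [← hcnd1]; exact hcnd2
    have hyc : ((Finset.Ioc (t - (s:ℤ)) t).filter (fun u => ι u = i₀)).card = κ₀ := by
      have hIocIcc : Finset.Icc (t - (s:ℤ) + 1) t = Finset.Ioc (t - (s:ℤ)) t := by
        ext u
        simp only [Finset.mem_Icc, Finset.mem_Ioc]
        omega
      simp only [hcnd2] at hcnd3
      rw [← hIocIcc]
      exact hcnd3
    have hTne' : ((Finset.Icc 1 s₀).filter (fun v => t ≤ hiC (croot, E) v)).Nonempty :=
      ⟨s₀, Finset.mem_filter.2 ⟨Finset.mem_Icc.2 ⟨hs₀1, le_rfl⟩, by omega⟩⟩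
    have hvm := Finset.min'_mem _ hTne'
    have hvle : ∀ w ∈ (Finset.Icc 1 s₀).filter (fun v => t ≤ hiC (croot, E) v),
        ((Finset.Icc 1 s₀).filter (fun v => t ≤ hiC (croot, E) v)).min' hTne' ≤ w :=
      fun w hw => Finset.min'_le _ w hw
    set v := ((Finset.Icc 1 s₀).filter (fun v => t ≤ hiC (croot, E) v)).min' hTne' with hvdef
    obtain ⟨hv12, hv3⟩ := Finset.mem_filter.1 hvm
    rw [Finset.mem_Icc] at hv12
    obtain ⟨hv1, hv2⟩ := hv12
    have hv2' : 2 ≤ v := by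
      by_contra hcv
      have hveq1 : v = 1 := by omega
      rw [hveq1, NumbMut.hiC_one] at hv3
      omega
    have hprev : hiC (croot, E) (v - 1) < t := by
      by_contra hcp
      push_neg at hcp
      have hmem : v - 1 ∈ (Finset.Icc 1 s₀).filter (fun v => t ≤ hiC (croot, E) v) :=
        Finset.mem_filter.2 ⟨Finset.mem_Icc.2 ⟨by omega, by omega⟩, hcp⟩
      have := hvle _ hmem
      omega
    have hveq : hiC (croot, E) v = t := by
      have hle := NumbMut.hiC_succ_le (croot, E) (v - 1)
      have hvv : v - 1 + 1 = v := by omega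
      rw [hvv] at hle
      omega
    have hylt : t - (s:ℤ) < loC (croot, E) v := by
      by_contra hcy
      push_neg at hcy
      have hlov : loC (croot, E) s₀ ≤ loC (croot, E) v := NumbMut.loC_anti (croot, E) hv2
      have hhiv : hiC (croot, E) v ≤ hiC (croot, E) s₀ := NumbMut.hiC_mono (croot, E) hv2
      have hsub : insert (t - (s:ℤ)) ((Finset.Ioc (t - (s:ℤ)) t).filter (fun u => ι u = i₀)) ⊆
          (Finset.Icc (loC (croot, E) s₀) (hiC (croot, E) s₀)).filter (fun u => ι u = i₀) := by
        intro u hu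
        rcases Finset.mem_insert.1 hu with rfl | hu
        · exact Finset.mem_filter.2 ⟨Finset.mem_Icc.2 ⟨by omega, by omega⟩, hyi⟩
        · obtain ⟨hmem, hval⟩ := Finset.mem_filter.1 hu
          rw [Finset.mem_Ioc] at hmem
          exact Finset.mem_filter.2 ⟨Finset.mem_Icc.2 ⟨by omega, by omega⟩, hval⟩
      have hnm : (t - (s:ℤ)) ∉ (Finset.Ioc (t - (s:ℤ)) t).filter (fun u => ι u = i₀) := by
        intro hmem
        have := (Finset.mem_filter.1 hmem).1
        rw [Finset.mem_Ioc] at this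
        omega
      have hcard := Finset.card_le_card hsub
      rw [Finset.card_insert_of_notMem hnm, hyc, F1] at hcard
      omega
    have hsize := NumbMut.hiC_sub_loC (croot, E) v
    have hsv : v ≤ s := by
      have : (v:ℤ) ≤ (s:ℤ) := by omega
      exact_mod_cast this
    have := NumbMut.hiC_mono (croot, E) hsv
    omega
  · -- occurrence above dd ⇒ mutation
    rintro ⟨⟨hdt, htb⟩, hti⟩
    have hhit : hiC (croot, E) s₀ < t := hocc_gt t hdt hti
    have hct : croot < t := by omega
    refine ⟨⟨hct, htb⟩, ?_⟩
    have hcount' : κ₀ + 1 ≤ ((Finset.Ioc (cc - 1) t).filter (fun u => ι u = i₀)).card := by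
      have hsub : insert t ((Finset.Icc cc dd).filter (fun u => ι u = i₀)) ⊆
          (Finset.Ioc (cc - 1) t).filter (fun u => ι u = i₀) := by
        intro u hu
        rcases Finset.mem_insert.1 hu with rfl | hu
        · exact Finset.mem_filter.2 ⟨Finset.mem_Ioc.2 ⟨by omega, le_rfl⟩, hti⟩
        · obtain ⟨hmem, hval⟩ := Finset.mem_filter.1 hu
          rw [Finset.mem_Icc] at hmem
          exact Finset.mem_filter.2 ⟨Finset.mem_Ioc.2 ⟨by omega, by omega⟩, hval⟩
      have hnm : t ∉ (Finset.Icc cc dd).filter (fun u => ι u = i₀) := by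
        intro hmem
        have := (Finset.mem_filter.1 hmem).1
        rw [Finset.mem_Icc] at this
        omega
      have hcard := Finset.card_le_card hsub
      rw [Finset.card_insert_of_notMem hnm, hccount] at hcard
      exact hcard
    obtain ⟨z, hz1, hz2, hz3, hz4⟩ := NumbMut.exists_occ (fun u => ι u = i₀) κ₀
      (t - (cc - 1)).toNat (cc - 1) t le_rfl hcount'
    have hzt : z < t := by
      rcases eq_or_lt_of_le hz2 with rfl | h
      · rw [Finset.Ioc_self, Finset.filter_empty] at hz4
        simp at hz4
        omega
      · exact h
    have hs1 : 1 ≤ (t - z).toNat := by omega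
    have hscast : ((t - z).toNat : ℤ) = t - z := Int.toNat_of_nonneg (by omega)
    refine ⟨(t - z).toNat, hs1, ⟨?_, hti, ?_⟩, ?_⟩
    · rw [show t - ((t - z).toNat : ℤ) = z by omega, hti, hz3]
    · have hIcc : Finset.Icc (t - ((t - z).toNat : ℤ) + 1) t = Finset.Ioc z t := by
        ext u
        simp only [Finset.mem_Icc, Finset.mem_Ioc]
        omega
      rw [hIcc]
      simp only [hti]
      exact hz4
    · rw [hKcount _ hs1]
      have hhs : hiC (croot, E) (t - z).toNat < t := by
        by_contra hcs
        push_neg at hcs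
        have hs₀s : s₀ ≤ (t - z).toNat := by
          by_contra hss
          push_neg at hss
          have := NumbMut.hiC_mono (croot, E) (le_of_lt hss)
          omega
        have hlos : loC (croot, E) (t - z).toNat ≤ loC (croot, E) s₀ :=
          NumbMut.loC_anti (croot, E) hs₀s
        have hsize := NumbMut.hiC_sub_loC (croot, E) (t - z).toNat
        omega
      omega
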